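/- arXiv:1807.11585 — 9 statements merged into one kernel-verified Lean document; each statement's English description precedes it below -/
import Mathlib

section
/- Let X be a topological space equipped with a partial order ≤ whose strict part has the property that the set {(x,y) : x < y} is open in X × X. If ≿_n is a sequence of complete, continuous (closed), strictly monotone binary relations on X converging in the closed convergence sense to a closed relation ≿, then ≿ is complete and strictly monotone. -/
open Filter Topology

/-- Closed convergence of a sequence of relations to a relation. -/
def ClosedConv {X : Type*} [TopologicalSpace X]
    (Rn : ℕ → X → X → Prop) (R : X → X → Prop) : Prop :=
  (∀ x y, R x y → ∀ V ∈ nhds ((x, y) : X × X),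
      ∃ N, ∀ n ≥ N, ∃ p ∈ V, Rn n p.1 p.2) ∧
  (∀ x y, (∀ V ∈ nhds ((x, y) : X × X), ∀ N : ℕ, ∃ n ≥ N, ∃ p ∈ V, Rn n p.1 p.2) →
      R x y)

/-- if the strict order `<` is open and `≿_n` is a sequence of complete,
closed, strictly monotone relations converging (closed convergence) to a closed
relation `≿`, then `≿` is complete and strictly monotone. -/
theorem stmt_5 {X : Type*} [TopologicalSpace X] [PartialOrder X]
    (hopen : IsOpen {p : X × X | p.1 < p.2})
    (Rn : ℕ → X → X → Prop) (R : X → X → Prop)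
    (hcomplete : ∀ n, ∀ x y, Rn n x y ∨ Rn n y x)
    (hclosed : ∀ n, IsClosed {p : X × X | Rn n p.1 p.2})
    (hmono : ∀ n, ∀ x y : X, x < y → Rn n y x ∧ ¬ Rn n x y)
    (hRclosed : IsClosed {p : X × X | R p.1 p.2})
    (hconv : ClosedConv Rn R) :
    (∀ x y, R x y ∨ R y x) ∧ (∀ x y : X, x < y → R y x ∧ ¬ R x y) := by
  constructor
  · intro x y
    by_contra h
    push_neg at h
    obtain ⟨hxy, hyx⟩ := h
    -- negate the second clause of closed convergence for both pairs
    have h1 : ∃ V ∈ nhds ((x, y) : X × X), ∃ N : ℕ, ∀ n ≥ N, ∀ p ∈ V, ¬ Rn n (Prod.fst p) (Prod.snd p) := by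
      by_contra hc
      push_neg at hc
      exact hxy (hconv.2 x y (fun V hV N => hc V hV N))
    have h2 : ∃ V ∈ nhds ((y, x) : X × X), ∃ N : ℕ, ∀ n ≥ N, ∀ p ∈ V, ¬ Rn n (Prod.fst p) (Prod.snd p) := by
      by_contra hc
      push_neg at hc
      exact hyx (hconv.2 y x (fun V hV N => hc V hV N))
    obtain ⟨V, hV, N1, hN1⟩ := h1
    obtain ⟨W, hW, N2, hN2⟩ := h2
    rcases hcomplete (max N1 N2) x y with h | h
    · exact hN1 (max N1 N2) (le_max_left _ _) (x, y) (mem_of_mem_nhds hV) h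
    · exact hN2 (max N1 N2) (le_max_right _ _) (y, x) (mem_of_mem_nhds hW) h
  · intro x y hxy
    constructor
    · apply hconv.2 y x
      intro V hV N
      exact ⟨N, le_refl N, (y, x), mem_of_mem_nhds hV, (hmono N x y hxy).1⟩
    · intro hR
      have hVnhds : {p : X × X | p.1 < p.2} ∈ nhds ((x, y) : X × X) :=
        hopen.mem_nhds hxy
      obtain ⟨N, hN⟩ := hconv.1 x y hR _ hVnhds
      obtain ⟨p, hpV, hp⟩ := hN N (le_refl N)
      exact (hmono N p.1 p.2 hpV).2 hp
end

section
/- Let X be a topological space, B ⊆ X dense, and let ≿ and ≿' be two complete, continuous, locally strict binary relations on X. If the restrictions agree, i.e., for all a, b ∈ B, a ≿ b iff a ≿' b, then ≿ = ≿'. -/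
open Filter Topology

/-- A relation is locally strict if near any ranked pair there is a strictly ranked pair. -/
def LocallyStrict {X : Type*} [TopologicalSpace X] (R : X → X → Prop) : Prop :=
  ∀ x y, R x y → ∀ V ∈ nhds ((x, y) : X × X), ∃ p ∈ V, R p.1 p.2 ∧ ¬ R p.2 p.1

lemma aux_stmt6 {X : Type*} [TopologicalSpace X] (B : Set X) (hB : Dense B)
    (R R' : X → X → Prop)
    (hcomp : ∀ x y, R x y ∨ R y x)
    (hcl : IsClosed {p : X × X | R p.1 p.2})
    (hcl' : IsClosed {p : X × X | R' p.1 p.2})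
    (hls : LocallyStrict R)
    (hagree : ∀ a ∈ B, ∀ b ∈ B, (R a b → R' a b)) :
    ∀ x y, R x y → R' x y := by
  intro x y hR
  by_contra hnR'
  have hUopen : IsOpen {p : X × X | ¬ R' p.1 p.2} := hcl'.isOpen_compl
  have hU : {p : X × X | ¬ R' p.1 p.2} ∈ nhds ((x, y) : X × X) :=
    hUopen.mem_nhds hnR'
  obtain ⟨p, hpU, hp1, hp2⟩ := hls x y hR _ hU
  -- W : open set where ¬R' and ¬R.swap
  have hswapcl : IsClosed {q : X × X | R q.2 q.1} :=
    hcl.preimage continuous_swap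
  have hWopen : IsOpen ({p : X × X | ¬ R' p.1 p.2} ∩ {q : X × X | ¬ R q.2 q.1}) :=
    hUopen.inter hswapcl.isOpen_compl
  have hpW : p ∈ {p : X × X | ¬ R' p.1 p.2} ∩ {q : X × X | ¬ R q.2 q.1} := ⟨hpU, hp2⟩
  have hdense : Dense (B ×ˢ B) := hB.prod hB
  obtain ⟨q, hqBB, hqW⟩ := hdense.exists_mem_open hWopen ⟨p, hpW⟩
  obtain ⟨hq1, hq2⟩ := hqW
  have hRq : R q.1 q.2 := (hcomp q.1 q.2).resolve_right hq2
  exact hq1 (hagree q.1 hqBB.1 q.2 hqBB.2 hRq)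

/-- two complete, continuous (closed), locally strict binary relations
that agree on a dense set `B` are equal. -/
theorem stmt_6 {X : Type*} [TopologicalSpace X] (B : Set X) (hB : Dense B)
    (R R' : X → X → Prop)
    (hcomp : ∀ x y, R x y ∨ R y x) (hcomp' : ∀ x y, R' x y ∨ R' y x)
    (hcl : IsClosed {p : X × X | R p.1 p.2})
    (hcl' : IsClosed {p : X × X | R' p.1 p.2})
    (hls : LocallyStrict R) (hls' : LocallyStrict R')
    (hagree : ∀ a ∈ B, ∀ b ∈ B, (R a b ↔ R' a b)) :
    ∀ x y, R x y ↔ R' x y := by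
  intro x y
  constructor
  · exact aux_stmt6 B hB R R' hcomp hcl hcl' hls
      (fun a ha b hb => (hagree a ha b hb).mp) x y
  · exact aux_stmt6 B hB R' R hcomp' hcl' hcl hls'
      (fun a ha b hb => (hagree a ha b hb).mpr) x y
end

section
/- Let B ⊆ X be dense in a topological space X. Suppose ≿' is a complete binary relation on X, and ≿ and ≿* are continuous, locally strict, complete binary relations on X. If the restriction of ≿' to B × B is contained in both the restriction of ≿ to B × B and the restriction of ≿* to B × B, then ≿ = ≿*. -/
open Filter Topology

lemma stmt_7_aux {X : Type*} [TopologicalSpace X] (B : Set X) (hB : Dense B)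
    (R' R S : X → X → Prop)
    (hcomp' : ∀ x y, R' x y ∨ R' y x)
    (hclR : IsClosed {p : X × X | R p.1 p.2})
    (hclS : IsClosed {p : X × X | S p.1 p.2})
    (hls : LocallyStrict R)
    (hsub : ∀ a ∈ B, ∀ b ∈ B, R' a b → R a b)
    (hsubS : ∀ a ∈ B, ∀ b ∈ B, R' a b → S a b) :
    ∀ x y, R x y → S x y := by
  intro x y hR
  by_contra hS
  have hU : IsOpen {p : X × X | ¬ S p.1 p.2} := hclS.isOpen_compl
  obtain ⟨p, hpU, hpR, hpnR⟩ := hls x y hR _ (hU.mem_nhds hS)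
  have hRswap : IsClosed {q : X × X | R q.2 q.1} :=
    hclR.preimage continuous_swap
  have hV : IsOpen ({q : X × X | ¬ S q.1 q.2} ∩ {q : X × X | ¬ R q.2 q.1}) :=
    hU.inter hRswap.isOpen_compl
  have hne : ({q : X × X | ¬ S q.1 q.2} ∩ {q : X × X | ¬ R q.2 q.1}).Nonempty :=
    ⟨p, hpU, hpnR⟩
  obtain ⟨q, ⟨hqnS, hqnR⟩, hqBB⟩ := (hB.prod hB).inter_open_nonempty _ hV hne
  rcases hcomp' q.1 q.2 with h | h
  · exact hqnS (hsubS q.1 hqBB.1 q.2 hqBB.2 h)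
  · exact hqnR (hsub q.2 hqBB.2 q.1 hqBB.1 h)

/-- if `≿'` is complete and its restriction to a dense set `B` is
contained in the restrictions of two continuous, locally strict, complete relations
`≿` and `≿*`, then `≿ = ≿*`. -/
theorem stmt_7 {X : Type*} [TopologicalSpace X] (B : Set X) (hB : Dense B)
    (R' R Rstar : X → X → Prop)
    (hcomp' : ∀ x y, R' x y ∨ R' y x)
    (hcomp : ∀ x y, R x y ∨ R y x) (hcompstar : ∀ x y, Rstar x y ∨ Rstar y x)
    (hcl : IsClosed {p : X × X | R p.1 p.2})
    (hclstar : IsClosed {p : X × X | Rstar p.1 p.2})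
    (hls : LocallyStrict R) (hlsstar : LocallyStrict Rstar)
    (hsub : ∀ a ∈ B, ∀ b ∈ B, R' a b → R a b)
    (hsubstar : ∀ a ∈ B, ∀ b ∈ B, R' a b → Rstar a b) :
    ∀ x y, R x y ↔ Rstar x y := by
  intro x y
  constructor
  · exact stmt_7_aux B hB R' R Rstar hcomp' hcl hclstar hls hsub hsubstar x y
  · exact stmt_7_aux B hB R' Rstar R hcomp' hclstar hcl hlsstar hsubstar hsub x y
end

section
/- Let X be a connected topological space, B ⊆ X dense, and let ≿ and ≿' be two continuous preference relations (complete and transitive closed binary relations) on X. If ≿ and ≿' agree on B × B, then ≿ = ≿'. -/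
open Filter Topology

private lemma sec_left {X : Type*} [TopologicalSpace X] {R : X → X → Prop}
    (hcl : IsClosed {p : X × X | R p.1 p.2}) (x : X) : IsClosed {z | R x z} :=
  hcl.preimage (Continuous.prodMk_right x)

private lemma sec_right {X : Type*} [TopologicalSpace X] {R : X → X → Prop}
    (hcl : IsClosed {p : X × X | R p.1 p.2}) (y : X) : IsClosed {z | R z y} :=
  hcl.preimage (continuous_id.prodMk continuous_const)

/-- if y ≻' x strictly, there is a dense point strictly between. -/
private lemma between {X : Type*} [TopologicalSpace X] [ConnectedSpace X]
    {B : Set X} (hB : Dense B) {R' : X → X → Prop}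
    (hcomp' : ∀ x y, R' x y ∨ R' y x)
    (htrans' : ∀ x y z, R' x y → R' y z → R' x z)
    (hcl' : IsClosed {p : X × X | R' p.1 p.2})
    {x y : X} (hyx : ¬ R' x y) :
    ∃ b ∈ B, ¬ R' b y ∧ ¬ R' x b := by
  set A : Set X := {z | R' x z} with hA
  set C : Set X := {z | R' z y} with hC
  have hM : ({z | ¬ R' x z ∧ ¬ R' z y} : Set X).Nonempty := by
    by_contra hM
    rw [Set.not_nonempty_iff_eq_empty] at hM
    have hunion : ∀ z, z ∈ A ∨ z ∈ C := by
      intro z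
      by_contra h
      push_neg at h
      exact (Set.eq_empty_iff_forall_notMem.mp hM z) ⟨h.1, h.2⟩
    rcases Set.eq_empty_or_nonempty (A ∩ C) with hAC | hAC
    · -- A is clopen
      have hCcomp : C = Aᶜ := by
        apply Set.eq_of_subset_of_subset
        · intro z hz hzA
          exact Set.eq_empty_iff_forall_notMem.mp hAC z ⟨hzA, hz⟩
        · intro z hz
          exact (hunion z).resolve_left hz
      have hAopen : IsOpen A := by
        rw [← isClosed_compl_iff, ← hCcomp]; exact sec_right hcl' y
      have hAclopen : IsClopen A := ⟨sec_left hcl' x, hAopen⟩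
      have hAne : A.Nonempty := ⟨x, (hcomp' x x).elim id id⟩
      have : A = Set.univ := (isClopen_iff.mp hAclopen).resolve_left
        (Set.nonempty_iff_ne_empty.mp hAne)
      exact hyx (by have : y ∈ A := this ▸ Set.mem_univ y; exact this)
    · obtain ⟨w, hwA, hwC⟩ := hAC
      exact hyx (htrans' x w y hwA hwC)
  have hMopen : IsOpen ({z | ¬ R' x z ∧ ¬ R' z y} : Set X) := by
    have h1 : ({z | ¬ R' x z} : Set X) = {z | R' x z}ᶜ := rfl
    have h2 : ({z | ¬ R' z y} : Set X) = {z | R' z y}ᶜ := rfl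
    have : ({z | ¬ R' x z ∧ ¬ R' z y} : Set X)
        = {z | R' x z}ᶜ ∩ {z | R' z y}ᶜ := rfl
    rw [this]
    exact ((sec_left hcl' x).isOpen_compl).inter ((sec_right hcl' y).isOpen_compl)
  obtain ⟨b, hb1, hb2⟩ := hB.inter_open_nonempty _ hMopen hM
  exact ⟨b, hb2, hb1.2, hb1.1⟩

/-- a dense point c with c strictly below p in R' but c weakly above p in ¬R p c sense
gives a contradiction. -/
private lemma no_mixed {X : Type*} [TopologicalSpace X] {B : Set X} (hB : Dense B)
    {R R' : X → X → Prop} (hcomp : ∀ x y, R x y ∨ R y x)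
    (hcl : IsClosed {p : X × X | R p.1 p.2})
    (hcl' : IsClosed {p : X × X | R' p.1 p.2})
    (hagree : ∀ a ∈ B, ∀ b ∈ B, (R a b ↔ R' a b))
    {c : X} (hc : c ∈ B) {p : X} (h1 : ¬ R' c p) (h2 : ¬ R p c) : False := by
  have hUopen : IsOpen ({z | ¬ R' c z ∧ ¬ R z c} : Set X) := by
    have : ({z | ¬ R' c z ∧ ¬ R z c} : Set X)
        = {z | R' c z}ᶜ ∩ {z | R z c}ᶜ := rfl
    rw [this]
    exact ((sec_left hcl' c).isOpen_compl).inter ((sec_right hcl c).isOpen_compl)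
  obtain ⟨g, hg1, hg2⟩ := hB.inter_open_nonempty _ hUopen ⟨p, h1, h2⟩
  have hncg : ¬ R c g := fun h => hg1.1 ((hagree c hc g hg2).mp h)
  exact (hcomp c g).elim hncg hg1.2

private lemma aux {X : Type*} [TopologicalSpace X] [ConnectedSpace X]
    {B : Set X} (hB : Dense B)
    {R R' : X → X → Prop}
    (hcomp : ∀ x y, R x y ∨ R y x) (hcomp' : ∀ x y, R' x y ∨ R' y x)
    (htrans : ∀ x y z, R x y → R y z → R x z)
    (htrans' : ∀ x y z, R' x y → R' y z → R' x z)
    (hcl : IsClosed {p : X × X | R p.1 p.2})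
    (hcl' : IsClosed {p : X × X | R' p.1 p.2})
    (hagree : ∀ a ∈ B, ∀ b ∈ B, (R a b ↔ R' a b)) :
    ∀ x y, R x y → R' x y := by
  intro x y hxy
  by_contra hxy'
  obtain ⟨b, hbB, hby', hxb'⟩ := between hB hcomp' htrans' hcl' hxy'
  by_cases hyb : R y b
  · by_cases hbx : R b x
    · obtain ⟨a, haB, hay', hba'⟩ := between hB hcomp' htrans' hcl' hby'
      have hba : ¬ R b a := fun h => hba' ((hagree b hbB a haB).mp h)
      have hya : ¬ R y a := fun h => hba (htrans b x a hbx (htrans x y a hxy h))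
      exact no_mixed hB hcomp hcl hcl' hagree haB hay' hya
    · exact no_mixed hB hcomp' hcl' hcl
        (fun a ha b hb => (hagree a ha b hb).symm) hbB hbx hxb'
  · exact no_mixed hB hcomp hcl hcl' hagree hbB hby' hyb

/-- on a connected space, two continuous (closed) preference relations
(complete and transitive) agreeing on a dense set are equal. -/
theorem stmt_8 {X : Type*} [TopologicalSpace X] [ConnectedSpace X]
    (B : Set X) (hB : Dense B)
    (R R' : X → X → Prop)
    (hcomp : ∀ x y, R x y ∨ R y x) (hcomp' : ∀ x y, R' x y ∨ R' y x)
    (htrans : ∀ x y z, R x y → R y z → R x z)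
    (htrans' : ∀ x y z, R' x y → R' y z → R' x z)
    (hcl : IsClosed {p : X × X | R p.1 p.2})
    (hcl' : IsClosed {p : X × X | R' p.1 p.2})
    (hagree : ∀ a ∈ B, ∀ b ∈ B, (R a b ↔ R' a b)) :
    ∀ x y, R x y ↔ R' x y := by
  intro x y
  constructor
  · exact aux hB hcomp hcomp' htrans htrans' hcl hcl' hagree x y
  · exact aux hB hcomp' hcomp htrans' htrans hcl' hcl
      (fun a ha b hb => (hagree a ha b hb).symm) x y
end

section
/- Let X be a connected topological space and ≿ a continuous preference relation on X. If x ≻ y, then the set V = {z ∈ X : x ≻ z ≻ y} is nonempty and open. -/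
open Filter Topology

/-- for a continuous preference relation on a connected space,
if `x ≻ y` then `{z : x ≻ z ≻ y}` is nonempty and open. -/
theorem stmt_9 {X : Type*} [TopologicalSpace X] [ConnectedSpace X]
    (R : X → X → Prop)
    (hcomp : ∀ x y, R x y ∨ R y x)
    (htrans : ∀ x y z, R x y → R y z → R x z)
    (hcl : IsClosed {p : X × X | R p.1 p.2})
    (x y : X) (hxy : R x y ∧ ¬ R y x) :
    ({z : X | (R x z ∧ ¬ R z x) ∧ (R z y ∧ ¬ R y z)}).Nonempty ∧
      IsOpen {z : X | (R x z ∧ ¬ R z x) ∧ (R z y ∧ ¬ R y z)} := by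
  -- A = {z | x ≻ z}, B = {z | z ≻ y}
  have hAopen : IsOpen {z : X | ¬ R z x} := by
    have : IsClosed {z : X | R z x} :=
      hcl.preimage (Continuous.prodMk continuous_id continuous_const)
    simpa [Set.compl_setOf] using this.isOpen_compl
  have hBopen : IsOpen {z : X | ¬ R y z} := by
    have : IsClosed {z : X | R y z} :=
      hcl.preimage (Continuous.prodMk continuous_const continuous_id)
    simpa [Set.compl_setOf] using this.isOpen_compl
  have hset : {z : X | (R x z ∧ ¬ R z x) ∧ (R z y ∧ ¬ R y z)}
      = {z : X | ¬ R z x} ∩ {z : X | ¬ R y z} := by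
    ext z
    constructor
    · rintro ⟨⟨_, h1⟩, ⟨_, h2⟩⟩; exact ⟨h1, h2⟩
    · rintro ⟨h1, h2⟩
      exact ⟨⟨(hcomp x z).resolve_right h1, h1⟩, ⟨(hcomp z y).resolve_right h2, h2⟩⟩
  constructor
  · by_contra hempty
    rw [Set.not_nonempty_iff_eq_empty, hset] at hempty
    -- cover: every z satisfies ¬R z x ∨ ¬R y z
    have hcover : ∀ z : X, ¬ R z x ∨ ¬ R y z := by
      intro z
      by_contra h
      push_neg at h
      exact hxy.2 (htrans y z x h.2 h.1)
    -- A is clopen: its complement is B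
    have hcompl : {z : X | ¬ R z x}ᶜ = {z : X | ¬ R y z} := by
      ext z
      simp only [Set.mem_compl_iff, Set.mem_setOf_eq, not_not]
      constructor
      · intro hz
        rcases hcover z with h | h
        · exact absurd hz h
        · exact h
      · intro hz
        by_contra hzx
        exact (Set.eq_empty_iff_forall_notMem.mp hempty z) ⟨hzx, hz⟩
    have hclopen : IsClopen {z : X | ¬ R z x} :=
      ⟨by rw [← isOpen_compl_iff, hcompl]; exact hBopen, hAopen⟩
    rcases isClopen_iff.mp hclopen with h | h
    · have : y ∈ {z : X | ¬ R z x} := hxy.2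
      rw [h] at this; exact this
    · have : x ∈ {z : X | ¬ R z x}ᶜ := by
        simp only [Set.mem_compl_iff, Set.mem_setOf_eq, not_not]
        exact (hcomp x x).elim id id
      rw [h] at this; exact this (Set.mem_univ x)
  · rw [hset]; exact hAopen.inter hBopen
end

section
/- Any closed-convergence limit of a sequence of continuous preference relations (complete and transitive) on a topological space X is quasitransitive: if x ≻ y and y ≻ z for the limit relation ≿, then x ≻ z. -/
open Filter Topology

/-- any closed-convergence limit of continuous (closed) preference
relations (complete and transitive) is quasitransitive: the strict part of the limit
is transitive. -/
theorem stmt_10 {X : Type*} [TopologicalSpace X]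
    (Rn : ℕ → X → X → Prop) (R : X → X → Prop)
    (hcomp : ∀ n, ∀ x y, Rn n x y ∨ Rn n y x)
    (htrans : ∀ n, ∀ x y z, Rn n x y → Rn n y z → Rn n x z)
    (hcl : ∀ n, IsClosed {p : X × X | Rn n p.1 p.2})
    (hconv : ClosedConv Rn R) :
    ∀ x y z, (R x y ∧ ¬ R y x) → (R y z ∧ ¬ R z y) → (R x z ∧ ¬ R z x) := by
  rintro x y z ⟨hxy, hnyx⟩ ⟨hyz, hnzy⟩
  -- extract a rectangular neighborhood of (y,x) eventually missed by Rn
  have h1 : ∃ V ∈ nhds ((y, x) : X × X), ∃ N, ∀ n ≥ N, ∀ p ∈ V, ¬ Rn n p.1 p.2 := by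
    by_contra h
    push_neg at h
    exact hnyx (hconv.2 y x (fun V hV N => h V hV N))
  have h2 : ∃ V ∈ nhds ((z, y) : X × X), ∃ N, ∀ n ≥ N, ∀ p ∈ V, ¬ Rn n p.1 p.2 := by
    by_contra h
    push_neg at h
    exact hnzy (hconv.2 z y (fun V hV N => h V hV N))
  obtain ⟨V, hV, N1, hN1⟩ := h1
  obtain ⟨W, hW, N2, hN2⟩ := h2
  rw [mem_nhds_prod_iff] at hV hW
  obtain ⟨V1, hV1, V2, hV2, hVsub⟩ := hV
  obtain ⟨W1, hW1, W2, hW2, hWsub⟩ := hW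
  -- for n large, Rn a b for all a ∈ V2 (near x), b ∈ V1 (near y)
  have key1 : ∀ n ≥ N1, ∀ a ∈ V2, ∀ b ∈ V1, Rn n a b := by
    intro n hn a ha b hb
    rcases hcomp n a b with h | h
    · exact h
    · exact absurd h (hN1 n hn (b, a) (hVsub ⟨hb, ha⟩))
  have key2 : ∀ n ≥ N2, ∀ a ∈ W2, ∀ b ∈ W1, Rn n a b := by
    intro n hn a ha b hb
    rcases hcomp n a b with h | h
    · exact h
    · exact absurd h (hN2 n hn (b, a) (hWsub ⟨hb, ha⟩))
  constructor
  · -- R x z : eventually Rn n x z holds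
    apply hconv.2
    intro U hU N
    refine ⟨max N (max N1 N2), le_max_left _ _, (x, z), mem_of_mem_nhds hU, ?_⟩
    have hn1 : max N (max N1 N2) ≥ N1 := le_trans (le_max_left _ _) (le_max_right _ _)
    have hn2 : max N (max N1 N2) ≥ N2 := le_trans (le_max_right _ _) (le_max_right _ _)
    exact htrans _ x y z (key1 _ hn1 x (mem_of_mem_nhds hV2) y (mem_of_mem_nhds hV1))
      (key2 _ hn2 y (mem_of_mem_nhds hW2) z (mem_of_mem_nhds hW1))
  · -- ¬ R z x
    intro hzx
    obtain ⟨N3, hN3⟩ := hconv.1 z x hzx (W1 ×ˢ V2)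
      (prod_mem_nhds hW1 hV2)
    obtain ⟨p, hp, hRp⟩ := hN3 (max N3 (max N1 N2)) (le_max_left _ _)
    have hn1 : max N3 (max N1 N2) ≥ N1 := le_trans (le_max_left _ _) (le_max_right _ _)
    have hn2 : max N3 (max N1 N2) ≥ N2 := le_trans (le_max_right _ _) (le_max_right _ _)
    -- p.1 ∈ W1 (near z), p.2 ∈ V2 (near x), Rn p.1 p.2
    have hRy : Rn (max N3 (max N1 N2)) p.1 y :=
      htrans _ p.1 p.2 y hRp (key1 _ hn1 p.2 hp.2 y (mem_of_mem_nhds hV1))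
    exact hN2 _ hn2 (p.1, y) (hWsub ⟨hp.1, mem_of_mem_nhds hW2⟩) hRy
end

section
/- Let X be a locally compact Polish space with a strict partial order < such that {(x,y) : x < y} is open, and suppose every complete, continuous, strictly monotone binary relation on X is locally strict. Let ≿* be a continuous, complete, strictly monotone relation generating choices, and let the experiment pairs have dense union B with every pair of B-elements eventually observed. If each ≿_k is a complete, continuous, strictly monotone relation weakly rationalizing the data of order k (for each observed pair {a,b} with a chosen, a ≿_k b, where chosen elements are ≿*-optimal in the pair), then ≿_k → ≿* in the topology of closed convergence. -/
open Filter Topology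

/-- weak rationalizations: on a locally compact Polish space with an
open strict order such that complete continuous strictly monotone relations are
locally strict, any sequence of complete, continuous, strictly monotone relations
weakly rationalizing the finite choice data generated by such a relation `≿*`
converges to `≿*` in the topology of closed convergence. -/
theorem stmt_14 {X : Type*} [TopologicalSpace X] [PolishSpace X]
    [LocallyCompactSpace X] [PartialOrder X]
    (hopen : IsOpen {p : X × X | p.1 < p.2})
    (hlocstrict : ∀ R : X → X → Prop,
      (∀ x y, R x y ∨ R y x) → IsClosed {p : X × X | R p.1 p.2} →
      (∀ x y : X, x < y → R y x ∧ ¬ R x y) → LocallyStrict R)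
    (pairs : ℕ → X × X)
    (B : Set X) (hBdef : B = {z | ∃ k, z = (pairs k).1 ∨ z = (pairs k).2})
    (hBdense : Dense B)
    (hallpairs : ∀ a ∈ B, ∀ b ∈ B, ∃ k, pairs k = (a, b) ∨ pairs k = (b, a))
    -- the data-generating relation
    (Rstar : X → X → Prop)
    (hstarcl : IsClosed {p : X × X | Rstar p.1 p.2})
    (hstarcomp : ∀ x y, Rstar x y ∨ Rstar y x)
    (hstarmono : ∀ x y : X, x < y → Rstar y x ∧ ¬ Rstar x y)
    -- the observed choices: from each pair an element optimal under `≿*` is chosen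
    (c : ℕ → X)
    (hc : ∀ k, (c k = (pairs k).1 ∨ c k = (pairs k).2) ∧
      Rstar (c k) (pairs k).1 ∧ Rstar (c k) (pairs k).2)
    -- the rationalizing relations
    (Rk : ℕ → X → X → Prop)
    (hkcl : ∀ k, IsClosed {p : X × X | Rk k p.1 p.2})
    (hkcomp : ∀ k, ∀ x y, Rk k x y ∨ Rk k y x)
    (hkmono : ∀ k, ∀ x y : X, x < y → Rk k y x ∧ ¬ Rk k x y)
    -- weak rationalization of the data of order k
    (hrat : ∀ k, ∀ i < k, Rk k (c i) (pairs i).1 ∧ Rk k (c i) (pairs i).2) :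
    ClosedConv Rk Rstar := by
  -- the set of pairs strictly reverse-ranked by `Rstar` is open
  have hstarcl' : IsClosed {q : X × X | Rstar q.2 q.1} :=
    hstarcl.preimage (continuous_swap : Continuous (Prod.swap : X × X → X × X))
  have hstarLS : LocallyStrict Rstar := hlocstrict Rstar hstarcomp hstarcl hstarmono
  -- Part 1
  have part1 : ∀ x y, Rstar x y → ∀ V ∈ nhds ((x, y) : X × X),
      ∃ N, ∀ n ≥ N, ∃ p ∈ V, Rk n p.1 p.2 := by
    intro x y hxy V hV
    obtain ⟨U, hUV, hUo, hxyU⟩ := mem_nhds_iff.mp hV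
    obtain ⟨p, hpU, _, hp2⟩ := hstarLS x y hxy U (hUo.mem_nhds hxyU)
    have hWo : IsOpen (U ∩ {q : X × X | ¬ Rstar q.2 q.1}) :=
      hUo.inter hstarcl'.isOpen_compl
    have hWne : (U ∩ {q : X × X | ¬ Rstar q.2 q.1}).Nonempty := ⟨p, hpU, hp2⟩
    have hBB : Dense (B ×ˢ B) := hBdense.prod hBdense
    obtain ⟨q, hqBB, hqU, hqns⟩ := hBB.exists_mem_open hWo hWne
    have hqab : Rstar q.1 q.2 := (hstarcomp q.1 q.2).resolve_right hqns
    obtain ⟨k, hk⟩ := hallpairs q.1 hqBB.1 q.2 hqBB.2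
    refine ⟨k + 1, fun n hn => ⟨q, hUV hqU, ?_⟩⟩
    have hck : c k = q.1 := by
      rcases hk with h | h <;> rcases (hc k).1 with h' | h' <;> rw [h] at h' <;>
        simp only at h'
      · exact h'
      · exact absurd ((hc k).2.1) (by rw [h', h]; exact hqns)
      · exact absurd ((hc k).2.2) (by rw [h', h]; exact hqns)
      · exact h'
    have hr := hrat n k (by omega)
    rcases hk with h | h
    · have := hr.2; rw [hck, h] at this; exact this
    · have := hr.1; rw [hck, h] at this; exact this
  refine ⟨part1, ?_⟩
  -- the "limit superior" relation
  set R : X → X → Prop := fun x y =>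
    ∀ V ∈ nhds ((x, y) : X × X), ∀ N : ℕ, ∃ n ≥ N, ∃ p ∈ V, Rk n p.1 p.2 with hRdef
  have hRstarR : ∀ x y, Rstar x y → R x y := by
    intro x y hxy V hV N
    obtain ⟨M, hM⟩ := part1 x y hxy V hV
    obtain ⟨p, hp, hRp⟩ := hM (max M N) (le_max_left _ _)
    exact ⟨max M N, le_max_right _ _, p, hp, hRp⟩
  -- R is closed
  have hRcl : IsClosed {p : X × X | R p.1 p.2} := by
    rw [isClosed_iff_nhds]
    intro z hz V hV N
    obtain ⟨O, hOV, hOo, hzO⟩ := mem_nhds_iff.mp hV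
    obtain ⟨w, hwO, hwR⟩ := hz O (hOo.mem_nhds hzO)
    obtain ⟨n, hn, p, hpO, hRp⟩ := hwR O (hOo.mem_nhds hwO) N
    exact ⟨n, hn, p, hOV hpO, hRp⟩
  -- R is complete
  have hRcomp : ∀ x y, R x y ∨ R y x := by
    intro x y
    by_contra h
    push_neg at h
    obtain ⟨h1, h2⟩ := h
    simp only [hRdef] at h1 h2
    push_neg at h1 h2
    obtain ⟨V1, hV1, N1, hN1⟩ := h1
    obtain ⟨V2, hV2, N2, hN2⟩ := h2
    rcases hkcomp (max N1 N2) x y with hxy | hyx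
    · exact hN1 (max N1 N2) (le_max_left _ _) (x, y) (mem_of_mem_nhds hV1) hxy
    · exact hN2 (max N1 N2) (le_max_right _ _) (y, x) (mem_of_mem_nhds hV2) hyx
  -- R is strictly monotone
  have hRmono : ∀ x y : X, x < y → R y x ∧ ¬ R x y := by
    intro x y hxy
    refine ⟨hRstarR y x (hstarmono x y hxy).1, ?_⟩
    intro hR
    obtain ⟨n, _, p, hp, hRp⟩ := hR {p : X × X | p.1 < p.2} (hopen.mem_nhds hxy) 0
    exact (hkmono n p.1 p.2 hp).2 hRp
  have hRLS : LocallyStrict R := hlocstrict R hRcomp hRcl hRmono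
  -- conclude
  intro x y hC
  by_contra hns
  have hU : IsOpen {q : X × X | ¬ Rstar q.1 q.2} := hstarcl.isOpen_compl
  obtain ⟨q, hqU, hq1, hq2⟩ := hRLS x y hC _ (hU.mem_nhds hns)
  exact hq2 (hRstarR q.2 q.1 ((hstarcomp q.1 q.2).resolve_left hqU))
end

section
/- Let X be a topological space, M ⊆ X a connected subset totally ordered by a strict order < compatible with a partial order ≤ on X, such that every x ∈ X is bounded below and above by elements of M. Let ≿ be a continuous, complete, transitive, strictly monotone preference on X. Then for every x ∈ X there is a unique m*(x) ∈ M with x ∼ m*(x) (i.e., x ≿ m*(x) and m*(x) ≿ x). -/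
open Filter Topology

/-- certainty equivalents: if `M ⊆ X` is connected, totally ordered,
and order-bounds every point of `X`, then each `x ∈ X` is indifferent to a unique
element of `M`, for any continuous, complete, transitive, strictly monotone
preference `≿`. -/
theorem stmt_15 {X : Type*} [TopologicalSpace X] [PartialOrder X]
    (M : Set X) (hMconn : IsConnected M)
    (hMtot : ∀ x ∈ M, ∀ y ∈ M, x ≠ y → x < y ∨ y < x)
    (hMbounds : ∀ x : X, (∃ m ∈ M, m ≤ x) ∧ (∃ m ∈ M, x ≤ m))
    (R : X → X → Prop)
    (hcl : IsClosed {p : X × X | R p.1 p.2})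
    (hcomp : ∀ x y, R x y ∨ R y x)
    (htrans : ∀ x y z, R x y → R y z → R x z)
    (hmono : ∀ x y : X, x < y → R y x ∧ ¬ R x y) :
    ∀ x : X, ∃! m : X, m ∈ M ∧ R x m ∧ R m x := by
  intro x
  set A : Set X := {m | R m x} with hA
  set B : Set X := {m | R x m} with hB
  have hAcl : IsClosed A := by
    have : Continuous (fun m : X => (m, x)) := continuous_id.prodMk continuous_const
    exact hcl.preimage this
  have hBcl : IsClosed B := by
    have : Continuous (fun m : X => (x, m)) := continuous_const.prodMk continuous_id
    exact hcl.preimage this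
  -- nonemptiness
  obtain ⟨⟨l, hlM, hl⟩, ⟨u, huM, hu⟩⟩ := hMbounds x
  have hBne : (M ∩ B).Nonempty := by
    refine ⟨l, hlM, ?_⟩
    rcases eq_or_lt_of_le hl with h | h
    · subst h; rcases hcomp l l with h | h <;> exact h
    · exact (hmono l x h).1
  have hAne : (M ∩ A).Nonempty := by
    refine ⟨u, huM, ?_⟩
    rcases eq_or_lt_of_le hu with h | h
    · subst h; rcases hcomp x x with h | h <;> exact h
    · exact (hmono x u h).1
  have hcover : M ⊆ A ∪ B := by
    intro m _
    rcases hcomp m x with h | h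
    · exact Or.inl h
    · exact Or.inr h
  have hmeet : (M ∩ (A ∩ B)).Nonempty :=
    (isPreconnected_closed_iff.mp hMconn.isPreconnected) A B hAcl hBcl hcover hAne hBne
  obtain ⟨m, hmM, hmA, hmB⟩ := hmeet
  refine ⟨m, ⟨hmM, hmB, hmA⟩, ?_⟩
  rintro m' ⟨hm'M, hxm', hm'x⟩
  by_contra hne
  rcases hMtot m' hm'M m hmM hne with h | h
  · exact (hmono m' m h).2 (htrans m' x m hm'x hmB)
  · exact (hmono m m' h).2 (htrans m x m' hmA hxm')
end

section
/- In the setting of the previous certainty-equivalent lemma, suppose additionally that for every m ∈ M and every neighborhood U of m in X there exist m̲, m̄ ∈ M with m ∈ [m̲, m̄] ⊆ U (and m̲ < m, m < m̄ when m is not extremal in M). Fix a continuous strictly increasing u : X → ℝ. Then the function u_≿(x) = u(m*(x)), where m*(x) ∈ M is the unique element with x ∼ m*(x), is a continuous utility representation of ≿: u_≿(x) ≥ u_≿(y) iff x ≿ y. -/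
/-!
The certainty equivalent `m*` is continuous: given a neighbourhood `[m̲, m̄]` of `m*(x₀)`
with `m̲ < m*(x₀) < m̄`, closedness of `≿` makes `{x | m̄ ≻ x ≻ m̲}` a neighbourhood of `x₀`,
and on it `m*` is squeezed into `[m̲, m̄]` because `≿` agrees with `≥` on the chain `M`.
At an extremal point of `M` the corresponding strict inequality is replaced by the fact
that the extremal point bounds every `x` via the order bounds in `M`.
Then `u ∘ m*` represents `≿` since `u` is strictly increasing on `M`.
-/

open Filter Topology

section CertaintyEquiv

variable {X : Type*} {M : Set X} {R : X → X → Prop}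

def IsCertaintyEquiv (R : X → X → Prop) (M : Set X) (c : X → X) : Prop :=
  ∀ x, c x ∈ M ∧ R x (c x) ∧ R (c x) x

theorem IsCertaintyEquiv.rel_iff {c : X → X} (hc : IsCertaintyEquiv R M c)
    (htrans : ∀ x y z, R x y → R y z → R x z) (x y : X) : R (c x) (c y) ↔ R x y :=
  ⟨fun h => htrans _ _ _ (hc x).2.1 (htrans _ _ _ h (hc y).2.2),
    fun h => htrans _ _ _ (hc x).2.2 (htrans _ _ _ h (hc y).2.1)⟩

section Order

variable [PartialOrder X]

theorem IsChain.le_of_not_lt (hM : IsChain (· ≤ ·) M) {a b : X} (ha : a ∈ M) (hb : b ∈ M)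
    (hab : ¬ a < b) : b ≤ a :=
  (hM.total ha hb).elim (fun h => (eq_of_le_of_not_lt h hab).ge) id

theorem StrictMonoOn.le_iff_le_of_isChain {β : Type*} [Preorder β] {f : X → β}
    (hf : StrictMonoOn f M) (hM : IsChain (· ≤ ·) M) {a b : X} (ha : a ∈ M) (hb : b ∈ M) :
    f a ≤ f b ↔ a ≤ b :=
  ⟨fun h => hM.le_of_not_lt hb ha fun hba => (hf hb ha hba).not_ge h, hf.monotoneOn ha hb⟩

theorem rel_of_le (hcomp : ∀ x y, R x y ∨ R y x) (hmono : ∀ x y : X, x < y → R y x ∧ ¬ R x y)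
    {a b : X} (h : a ≤ b) : R b a := by
  rcases h.eq_or_lt with rfl | h
  · exact (hcomp a a).elim id id
  · exact (hmono a b h).1

theorem le_iff_rel_of_mem (hM : IsChain (· ≤ ·) M) (hcomp : ∀ x y, R x y ∨ R y x)
    (hmono : ∀ x y : X, x < y → R y x ∧ ¬ R x y) {a b : X} (ha : a ∈ M) (hb : b ∈ M) :
    a ≤ b ↔ R b a := by
  refine ⟨rel_of_le hcomp hmono, fun hba => by_contra fun hab => ?_⟩
  exact (hmono b a ((hM.le_of_not_lt ha hb (mt le_of_lt hab)).lt_of_not_ge hab)).2 hba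

theorem rel_of_forall_not_lt (hM : IsChain (· ≤ ·) M) (hcomp : ∀ x y, R x y ∨ R y x)
    (htrans : ∀ x y z, R x y → R y z → R x z) (hmono : ∀ x y : X, x < y → R y x ∧ ¬ R x y)
    (hbdd : ∀ x : X, ∃ m ∈ M, x ≤ m) {m : X} (hm : m ∈ M) (hmax : ∀ m' ∈ M, ¬ m < m')
    (x : X) : R m x := by
  obtain ⟨m', hm', hxm'⟩ := hbdd x
  exact htrans _ _ _ (rel_of_le hcomp hmono (hM.le_of_not_lt hm hm' (hmax m' hm')))
    (rel_of_le hcomp hmono hxm')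

theorem rel_of_forall_not_gt (hM : IsChain (· ≤ ·) M) (hcomp : ∀ x y, R x y ∨ R y x)
    (htrans : ∀ x y z, R x y → R y z → R x z) (hmono : ∀ x y : X, x < y → R y x ∧ ¬ R x y)
    (hbdd : ∀ x : X, ∃ m ∈ M, m ≤ x) {m : X} (hm : m ∈ M) (hmin : ∀ m' ∈ M, ¬ m' < m)
    (x : X) : R x m := by
  obtain ⟨m', hm', hm'x⟩ := hbdd x
  exact htrans _ _ _ (rel_of_le hcomp hmono hm'x)
    (rel_of_le hcomp hmono (hM.le_of_not_lt hm' hm (hmin m' hm')))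

end Order

section Topology

variable [TopologicalSpace X]

theorem setOf_rel_mem_nhds (hcl : IsClosed {p : X × X | R p.1 p.2})
    (hcomp : ∀ x y, R x y ∨ R y x) {b x₀ : X} (h : ¬ R x₀ b) : {x | R b x} ∈ 𝓝 x₀ := by
  have hopen : IsOpen {x | ¬ R x b} :=
    (hcl.preimage (continuous_id.prodMk continuous_const)).isOpen_compl
  exact mem_of_superset (hopen.mem_nhds h) fun x hx => (hcomp x b).resolve_left hx

theorem setOf_rel_left_mem_nhds (hcl : IsClosed {p : X × X | R p.1 p.2})
    (hcomp : ∀ x y, R x y ∨ R y x) {a x₀ : X} (h : ¬ R a x₀) : {x | R x a} ∈ 𝓝 x₀ := by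
  have hopen : IsOpen {x | ¬ R a x} :=
    (hcl.preimage (continuous_const.prodMk continuous_id)).isOpen_compl
  exact mem_of_superset (hopen.mem_nhds h) fun x hx => (hcomp a x).resolve_left hx

variable [PartialOrder X]

theorem eventually_rel_of_le (hM : IsChain (· ≤ ·) M) (hcl : IsClosed {p : X × X | R p.1 p.2})
    (hcomp : ∀ x y, R x y ∨ R y x) (htrans : ∀ x y z, R x y → R y z → R x z)
    (hmono : ∀ x y : X, x < y → R y x ∧ ¬ R x y) (hbdd : ∀ x : X, ∃ m ∈ M, x ≤ m)
    {m mu x₀ : X} (hm : m ∈ M) (hmx₀ : R m x₀) (hle : m ≤ mu)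
    (hlt : (∃ m' ∈ M, m < m') → m < mu) : ∀ᶠ x in 𝓝 x₀, R mu x := by
  by_cases hmax : ∃ m' ∈ M, m < m'
  · exact setOf_rel_mem_nhds hcl hcomp fun hx₀ =>
      (hmono m mu (hlt hmax)).2 (htrans _ _ _ hmx₀ hx₀)
  · push Not at hmax
    exact Eventually.of_forall fun x => htrans _ _ _ (rel_of_le hcomp hmono hle)
      (rel_of_forall_not_lt hM hcomp htrans hmono hbdd hm hmax x)

theorem eventually_rel_of_ge (hM : IsChain (· ≤ ·) M) (hcl : IsClosed {p : X × X | R p.1 p.2})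
    (hcomp : ∀ x y, R x y ∨ R y x) (htrans : ∀ x y z, R x y → R y z → R x z)
    (hmono : ∀ x y : X, x < y → R y x ∧ ¬ R x y) (hbdd : ∀ x : X, ∃ m ∈ M, m ≤ x)
    {m ml x₀ : X} (hm : m ∈ M) (hx₀m : R x₀ m) (hle : ml ≤ m)
    (hlt : (∃ m' ∈ M, m' < m) → ml < m) : ∀ᶠ x in 𝓝 x₀, R x ml := by
  by_cases hmin : ∃ m' ∈ M, m' < m
  · exact setOf_rel_left_mem_nhds hcl hcomp fun hx₀ =>
      (hmono ml m (hlt hmin)).2 (htrans _ _ _ hx₀ hx₀m)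
  · push Not at hmin
    exact Eventually.of_forall fun x => htrans _ _ _
      (rel_of_forall_not_gt hM hcomp htrans hmono hbdd hm hmin x) (rel_of_le hcomp hmono hle)

theorem IsCertaintyEquiv.continuous {c : X → X} (hc : IsCertaintyEquiv R M c)
    (hM : IsChain (· ≤ ·) M) (hbdd : ∀ x : X, (∃ m ∈ M, m ≤ x) ∧ (∃ m ∈ M, x ≤ m))
    (hnhds : ∀ m ∈ M, ∀ U ∈ 𝓝 m, ∃ ml ∈ M, ∃ mu ∈ M,
      ml ≤ m ∧ m ≤ mu ∧ {z : X | ml ≤ z ∧ z ≤ mu} ⊆ U ∧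
      ((∃ m' ∈ M, m < m') → m < mu) ∧ ((∃ m' ∈ M, m' < m) → ml < m))
    (hcl : IsClosed {p : X × X | R p.1 p.2}) (hcomp : ∀ x y, R x y ∨ R y x)
    (htrans : ∀ x y z, R x y → R y z → R x z) (hmono : ∀ x y : X, x < y → R y x ∧ ¬ R x y) :
    Continuous c := by
  refine continuous_iff_continuousAt.2 fun x₀ U hU => mem_map.2 ?_
  obtain ⟨hm, hx₀m, hmx₀⟩ := hc x₀
  obtain ⟨ml, hml, mu, hmu, hml_le, hle_mu, hsub, hlt_mu, hml_lt⟩ := hnhds _ hm U hU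
  filter_upwards [eventually_rel_of_le hM hcl hcomp htrans hmono (fun x => (hbdd x).2) hm hmx₀
      hle_mu hlt_mu,
    eventually_rel_of_ge hM hcl hcomp htrans hmono (fun x => (hbdd x).1) hm hx₀m
      hml_le hml_lt] with x hmu_x hx_ml
  obtain ⟨hxM, hxc, hcx⟩ := hc x
  exact hsub ⟨(le_iff_rel_of_mem hM hcomp hmono hml hxM).2 (htrans _ _ _ hcx hx_ml),
    (le_iff_rel_of_mem hM hcomp hmono hxM hmu).2 (htrans _ _ _ hmu_x hxc)⟩

end Topology

theorem IsCertaintyEquiv.le_iff_rel [PartialOrder X] {β : Type*} [Preorder β] {c : X → X}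
    (hc : IsCertaintyEquiv R M c) (hM : IsChain (· ≤ ·) M) (hcomp : ∀ x y, R x y ∨ R y x)
    (htrans : ∀ x y z, R x y → R y z → R x z) (hmono : ∀ x y : X, x < y → R y x ∧ ¬ R x y)
    {f : X → β} (hf : StrictMonoOn f M) (x y : X) : f (c y) ≤ f (c x) ↔ R x y := by
  rw [hf.le_iff_le_of_isChain hM (hc y).1 (hc x).1,
    le_iff_rel_of_mem hM hcomp hmono (hc y).1 (hc x).1, hc.rel_iff htrans]

end CertaintyEquiv

theorem stmt_16_general {X : Type*} [TopologicalSpace X] [PartialOrder X]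
    (M : Set X)
    (hMtot : ∀ x ∈ M, ∀ y ∈ M, x ≠ y → x < y ∨ y < x)
    (hMbounds : ∀ x : X, (∃ m ∈ M, m ≤ x) ∧ (∃ m ∈ M, x ≤ m))
    -- local order-interval condition on M
    (hMnbhd : ∀ m ∈ M, ∀ U ∈ nhds m, ∃ ml ∈ M, ∃ mu ∈ M,
      ml ≤ m ∧ m ≤ mu ∧ {z : X | ml ≤ z ∧ z ≤ mu} ⊆ U ∧
      ((∃ m' ∈ M, m < m') → m < mu) ∧ ((∃ m' ∈ M, m' < m) → ml < m))
    (R : X → X → Prop)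
    (hcl : IsClosed {p : X × X | R p.1 p.2})
    (hcomp : ∀ x y, R x y ∨ R y x)
    (htrans : ∀ x y z, R x y → R y z → R x z)
    (hmono : ∀ x y : X, x < y → R y x ∧ ¬ R x y)
    (u : X → ℝ) (hu : Continuous u) (humono : StrictMono u)
    -- m* selects the certainty equivalent
    (mstar : X → X) (hmstar : ∀ x, mstar x ∈ M ∧ R x (mstar x) ∧ R (mstar x) x) :
    Continuous (fun x => u (mstar x)) ∧
      ∀ x y, u (mstar x) ≥ u (mstar y) ↔ R x y := by
  have hM : IsChain (· ≤ ·) M := IsChain.mono_rel (r := (· < ·)) hMtot fun _ _ => le_of_lt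
  have hc : IsCertaintyEquiv R M mstar := hmstar
  exact ⟨hu.comp (hc.continuous hM hMbounds hMnbhd hcl hcomp htrans hmono),
    hc.le_iff_rel hM hcomp htrans hmono (humono.strictMonoOn M)⟩

/-- in the certainty-equivalent setting, with the additional local
order-interval condition on `M`, for any continuous strictly increasing
`u : X → ℝ`, the map `x ↦ u (m*(x))` (where `m*(x) ∈ M` is the unique element
indifferent to `x`) is a continuous utility representation of `≿`. -/
theorem stmt_16 {X : Type*} [TopologicalSpace X] [PartialOrder X]
    (M : Set X) (hMconn : IsConnected M)
    (hMtot : ∀ x ∈ M, ∀ y ∈ M, x ≠ y → x < y ∨ y < x)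
    (hMbounds : ∀ x : X, (∃ m ∈ M, m ≤ x) ∧ (∃ m ∈ M, x ≤ m))
    -- local order-interval condition on M
    (hMnbhd : ∀ m ∈ M, ∀ U ∈ nhds m, ∃ ml ∈ M, ∃ mu ∈ M,
      ml ≤ m ∧ m ≤ mu ∧ {z : X | ml ≤ z ∧ z ≤ mu} ⊆ U ∧
      ((∃ m' ∈ M, m < m') → m < mu) ∧ ((∃ m' ∈ M, m' < m) → ml < m))
    (R : X → X → Prop)
    (hcl : IsClosed {p : X × X | R p.1 p.2})
    (hcomp : ∀ x y, R x y ∨ R y x)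
    (htrans : ∀ x y z, R x y → R y z → R x z)
    (hmono : ∀ x y : X, x < y → R y x ∧ ¬ R x y)
    (u : X → ℝ) (hu : Continuous u) (humono : StrictMono u)
    -- m* selects the certainty equivalent
    (mstar : X → X) (hmstar : ∀ x, mstar x ∈ M ∧ R x (mstar x) ∧ R (mstar x) x) :
    Continuous (fun x => u (mstar x)) ∧
      ∀ x y, u (mstar x) ≥ u (mstar y) ↔ R x y :=
  stmt_16_general M hMtot hMbounds hMnbhd R hcl hcomp htrans hmono u hu humono mstar hmstar
end
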